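/- arXiv:1508.01960 — 4 statements merged into one kernel-verified Lean document; each statement's English description precedes it below -/
import Mathlib

section
/- Let X be a Banach space that is the direct sum of finitely many closed subspaces X₁,...,Xₙ (with norm equivalent to the ℓ¹-sum of the coordinate norms). If every infinite-dimensional closed subspace of each Xⱼ contains an isomorphic copy of ℓ^p, then every infinite-dimensional closed subspace of X contains an isomorphic copy of ℓ^p. -/
open Set

/-- The subspace (given as a set) `E` of `Y` contains an isomorphic copy of `ℓ^p`:
there is a bounded linear map from `ℓ^p` into `Y` which is bounded below (an isomorphic
embedding) and whose range lies in `E`. -/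
def ContainsLpIn (p : ENNReal) [Fact (1 ≤ p)] {Y : Type*} [NormedAddCommGroup Y]
    [NormedSpace ℝ Y] (E : Set Y) : Prop :=
  ∃ T : lp (fun _ : ℕ => ℝ) p →L[ℝ] Y,
    (∃ c > 0, ∀ v, c * ‖v‖ ≤ ‖T v‖) ∧ Set.range T ⊆ E

/-- `Y` is `ℓ^p`-saturated: every infinite-dimensional closed subspace of `Y`
contains an isomorphic copy of `ℓ^p`. -/
def LpSaturated (p : ENNReal) [Fact (1 ≤ p)] (Y : Type*) [NormedAddCommGroup Y]
    [NormedSpace ℝ Y] : Prop :=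
  ∀ E : Submodule ℝ Y, IsClosed (E : Set Y) → ¬ FiniteDimensional ℝ E →
    ContainsLpIn p (E : Set Y)

/-!
If `E` is an infinite-dimensional closed subspace of `Π j, X j` (whose sup norm is equivalent to
the ℓ¹ norm), go through the coordinates one at a time: either some coordinate projection `πⱼ`
is bounded below on an infinite-dimensional closed subspace `F ≤ E`, and then a copy of `ℓ^p`
in the closed infinite-dimensional subspace `πⱼ(F)` of `Xⱼ` pulls back to `F`; or we pass to an
infinite-dimensional closed subspace on which `‖πⱼ x‖ ≤ ‖x‖ / 2`. The second alternative cannot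
occur for every coordinate.

The dichotomy for a single operator `S` is a Mazur-type construction: if `S` is bounded below on
no infinite-dimensional closed subspace, choose unit vectors `xₘ` with `‖S xₘ‖ ≤ ε 4⁻ᵐ / 2`, each
in the kernels of norming functionals `gₖ` of the earlier ones. The triangular system
`gₖ(xₘ) = 0` for `k < m` recovers the coefficients of `y = ∑ aₖ xₖ` with `|aₖ| ≤ 2ᵏ ‖y‖`, hence
`‖S y‖ ≤ ε ‖y‖` on the closed span of the `xₘ`.
-/

theorem Submodule.finiteDimensional_of_finiteDimensional_inf_ker {K V : Type*} [Field K]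
    [AddCommGroup V] [Module K V] (F : Submodule K V) (f : V →ₗ[K] K)
    (h : FiniteDimensional K ↥(F ⊓ LinearMap.ker f)) : FiniteDimensional K F :=
  Module.Finite.iff_fg.mpr <| F.fg_of_fg_map_of_fg_inf_ker f (IsNoetherian.noetherian _)
    (Module.Finite.iff_fg.mp h)

section ContainsLpIn

variable {p : ENNReal} [Fact (1 ≤ p)] {Y Z : Type*} [NormedAddCommGroup Y] [NormedSpace ℝ Y]
  [NormedAddCommGroup Z] [NormedSpace ℝ Z]

theorem containsLpIn_iff_antilipschitz {E : Set Y} :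
    ContainsLpIn p E ↔ ∃ T : lp (fun _ : ℕ => ℝ) p →L[ℝ] Y,
      (∃ K, AntilipschitzWith K T) ∧ range T ⊆ E := by
  simp only [ContainsLpIn, antilipschitzWith_iff_exists_mul_le_norm]

theorem ContainsLpIn.mono {E E' : Set Y} (hE : ContainsLpIn p E) (h : E ⊆ E') :
    ContainsLpIn p E' :=
  let ⟨T, hT, hTE⟩ := hE
  ⟨T, hT, hTE.trans h⟩

theorem ContainsLpIn.image {E : Set Y} (hE : ContainsLpIn p E) (L : Y →L[ℝ] Z) {K : NNReal}
    (hL : AntilipschitzWith K L) : ContainsLpIn p (L '' E) := by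
  obtain ⟨T, ⟨K', hT⟩, hTE⟩ := containsLpIn_iff_antilipschitz.mp hE
  refine containsLpIn_iff_antilipschitz.mpr ⟨L.comp T, ⟨_, hL.comp hT⟩, ?_⟩
  rw [ContinuousLinearMap.coe_comp, range_comp]
  exact image_mono hTE

theorem ContainsLpIn.univ_of_coe {A : Submodule ℝ Y} (hA : ContainsLpIn p (A : Set Y)) :
    ContainsLpIn p (univ : Set A) :=
  let ⟨T, hT, hTA⟩ := hA
  ⟨T.codRestrict A fun v => hTA ⟨v, rfl⟩, hT, subset_univ _⟩

theorem LpSaturated.containsLpIn_univ_of_antilipschitz [CompleteSpace Y] [CompleteSpace Z]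
    (hZ : LpSaturated p Z) (hY : ¬ FiniteDimensional ℝ Y) (L : Y →L[ℝ] Z) {K : NNReal}
    (hL : AntilipschitzWith K L) :
    ContainsLpIn p (univ : Set Y) := by
  have hclosed : IsClosed (range L) := hL.isClosed_range L.uniformContinuous
  let e := L.equivRange hL.injective hclosed
  have hrange : ContainsLpIn p (LinearMap.range (L : Y →ₗ[ℝ] Z) : Set Z) :=
    hZ _ (by rwa [LinearMap.coe_range]) fun _ => hY (Module.Finite.equiv e.symm.toLinearEquiv)
  exact (hrange.univ_of_coe.image (e.symm : LinearMap.range (L : Y →ₗ[ℝ] Z) →L[ℝ] Y)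
    e.symm.antilipschitz).mono (subset_univ _)

theorem LpSaturated.containsLpIn_of_boundedBelow [CompleteSpace Y] [CompleteSpace Z]
    (hZ : LpSaturated p Z) (L : Y →L[ℝ] Z) (F : Submodule ℝ Y) (hFc : IsClosed (F : Set Y))
    (hFd : ¬ FiniteDimensional ℝ F) (hL : ∃ c > 0, ∀ x ∈ F, c * ‖x‖ ≤ ‖L x‖) :
    ContainsLpIn p (F : Set Y) := by
  have := hFc.completeSpace_coe
  obtain ⟨K, hK⟩ := (antilipschitzWith_iff_exists_mul_le_norm (f := L.comp F.subtypeL)).mpr <|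
    let ⟨c, hc, hLc⟩ := hL
    ⟨c, hc, fun x : F => hLc x x.2⟩
  have := (hZ.containsLpIn_univ_of_antilipschitz hFd (L.comp F.subtypeL) hK).image F.subtypeL
    (AntilipschitzWith.subtype_coe _)
  exact this.mono (by simp)

end ContainsLpIn

section Dichotomy

variable {Y Z : Type*} [NormedAddCommGroup Y] [NormedSpace ℝ Y] [NormedAddCommGroup Z]
  [NormedSpace ℝ Z]

structure IsUnitTriangular (x : ℕ → Y) (g : ℕ → StrongDual ℝ Y) : Prop where
  norm_le : ∀ m, ‖x m‖ ≤ 1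
  opNorm_le : ∀ m, ‖g m‖ ≤ 1
  apply_self : ∀ m, g m (x m) = 1
  apply_of_lt : ∀ {k m}, k < m → g k (x m) = 0

theorem exists_unitTriangular_seq (G : Submodule ℝ Y) (hGc : IsClosed (G : Set Y))
    (hGd : ¬ FiniteDimensional ℝ G) (P : ℕ → Y → Prop)
    (hP : ∀ m, ∀ F ≤ G, IsClosed (F : Set Y) → ¬ FiniteDimensional ℝ F →
      ∃ x ∈ F, ‖x‖ = 1 ∧ P m x) :
    ∃ (x : ℕ → Y) (g : ℕ → StrongDual ℝ Y), IsUnitTriangular x g ∧ (∀ m, x m ∈ G) ∧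
      ∀ m, P m (x m) := by
  let Adm := {F : Submodule ℝ Y // F ≤ G ∧ IsClosed (F : Set Y) ∧ ¬ FiniteDimensional ℝ F}
  choose pt hpt_mem hpt_norm hpt_P using fun m (F : Adm) => hP m F.1 F.2.1 F.2.2.1 F.2.2.2
  choose dual hdual_norm hdual_apply using fun y : Y => exists_dual_vector'' ℝ y
  let next (m : ℕ) (F : Adm) : Adm :=
    ⟨F.1 ⊓ LinearMap.ker (dual (pt m F) : Y →ₗ[ℝ] ℝ), inf_le_left.trans F.2.1,
      F.2.2.1.inter (dual (pt m F)).isClosed_ker,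
      fun h => F.2.2.2 (F.1.finiteDimensional_of_finiteDimensional_inf_ker _ h)⟩
  let chain (m : ℕ) : Adm := Nat.rec ⟨G, le_rfl, hGc, hGd⟩ next m
  have hanti : Antitone fun m => (chain m).1 := antitone_nat_of_succ_le fun _ => inf_le_left
  refine ⟨fun m => pt m (chain m), fun m => dual (pt m (chain m)),
    ⟨fun m => (hpt_norm _ _).le, fun m => hdual_norm _, fun m => by simp [hdual_apply, hpt_norm],
      fun {k m} hkm => (hanti (Nat.succ_le_of_lt hkm) (hpt_mem m (chain m))).2⟩,
    fun m => (chain m).2.1 (hpt_mem _ _), fun m => hpt_P _ _⟩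

theorem IsUnitTriangular.abs_le_of_sum_range {x : ℕ → Y} {g : ℕ → StrongDual ℝ Y}
    (h : IsUnitTriangular x g) (N : ℕ) (a : ℕ → ℝ) {j : ℕ} (hj : j < N) :
    |a j| ≤ 2 ^ j * ‖∑ k ∈ Finset.range N, a k • x k‖ := by
  set y := ∑ k ∈ Finset.range N, a k • x k
  induction j using Nat.strong_induction_on with
  | _ j ih =>
  have hgy : g j y = ∑ k ∈ Finset.range (j + 1), a k * g j (x k) := by
    simp only [y, map_sum, map_smul, smul_eq_mul]
    refine (Finset.sum_subset (Finset.range_subset_range.mpr hj) fun k _ hk => ?_).symm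
    rw [h.apply_of_lt (by simpa using hk), mul_zero]
  rw [Finset.sum_range_succ, h.apply_self, mul_one] at hgy
  have hgj : ∀ z, |g j z| ≤ ‖z‖ := fun z => by
    simpa using (g j).le_of_opNorm_le (h.opNorm_le j) z
  have hterm : ∀ k < j, |a k * g j (x k)| ≤ 2 ^ k * ‖y‖ := fun k hk => by
    rw [abs_mul]
    exact (mul_le_mul (ih k hk (hk.trans hj)) ((hgj _).trans (h.norm_le k)) (abs_nonneg _)
      (by positivity)).trans_eq (mul_one _)
  calc |a j| = |g j y - ∑ k ∈ Finset.range j, a k * g j (x k)| := by rw [hgy, add_sub_cancel_left]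
    _ ≤ |g j y| + ∑ k ∈ Finset.range j, |a k * g j (x k)| :=
      (abs_sub _ _).trans (add_le_add le_rfl (Finset.abs_sum_le_sum_abs _ _))
    _ ≤ ‖y‖ + ∑ k ∈ Finset.range j, 2 ^ k * ‖y‖ :=
      add_le_add (hgj y) (Finset.sum_le_sum fun k hk => hterm k (Finset.mem_range.mp hk))
    _ = 2 ^ j * ‖y‖ := by
      rw [← Finset.sum_mul, geom_sum_eq (by norm_num : (2 : ℝ) ≠ 1)]
      ring

theorem IsUnitTriangular.abs_le_of_linearCombination {x : ℕ → Y} {g : ℕ → StrongDual ℝ Y}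
    (h : IsUnitTriangular x g) (l : ℕ →₀ ℝ) (j : ℕ) :
    |l j| ≤ 2 ^ j * ‖Finsupp.linearCombination ℝ x l‖ := by
  obtain ⟨N, hN⟩ := l.support.exists_nat_subset_range
  by_cases hj : j < N
  · rw [Finsupp.linearCombination_apply,
      Finsupp.sum_of_support_subset l hN _ fun k _ => zero_smul ℝ (x k)]
    exact h.abs_le_of_sum_range N l hj
  · rw [Finsupp.notMem_support_iff.mp fun h => hj (Finset.mem_range.mp (hN h)), abs_zero]
    positivity

theorem IsUnitTriangular.linearIndependent {x : ℕ → Y} {g : ℕ → StrongDual ℝ Y}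
    (h : IsUnitTriangular x g) : LinearIndependent ℝ x :=
  linearIndependent_iff.mpr fun l hl => Finsupp.ext fun j => abs_nonpos_iff.mp <| by
    simpa [hl] using h.abs_le_of_linearCombination l j

theorem IsUnitTriangular.norm_apply_le_of_mem_span {x : ℕ → Y} {g : ℕ → StrongDual ℝ Y}
    (h : IsUnitTriangular x g) (S : Y →L[ℝ] Z) {C : ℝ}
    (hxS : ∀ k, ‖S (x k)‖ ≤ C * (1 / 4) ^ k) {y : Y} (hy : y ∈ Submodule.span ℝ (range x)) :
    ‖S y‖ ≤ 2 * C * ‖y‖ := by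
  rw [← Finsupp.range_linearCombination] at hy
  obtain ⟨l, rfl⟩ := hy
  set y := Finsupp.linearCombination ℝ x l
  have hC : 0 ≤ C := by simpa using (norm_nonneg _).trans (hxS 0)
  have hterm : ∀ k, ‖l k • S (x k)‖ ≤ C * ‖y‖ * (1 / 2) ^ k := fun k => by
    rw [norm_smul, Real.norm_eq_abs]
    calc |l k| * ‖S (x k)‖ ≤ (2 ^ k * ‖y‖) * (C * (1 / 4) ^ k) :=
          mul_le_mul (h.abs_le_of_linearCombination l k) (hxS k)
            (norm_nonneg _) (by positivity)
      _ = C * ‖y‖ * (1 / 2) ^ k := by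
          rw [div_pow, div_pow, one_pow,
            show (4 : ℝ) ^ k = 2 ^ k * 2 ^ k by rw [← mul_pow]; norm_num]
          field_simp
  calc ‖S y‖ = ‖∑ k ∈ l.support, l k • S (x k)‖ := by
        simp [y, Finsupp.linearCombination_apply, Finsupp.sum]
    _ ≤ ∑ k ∈ l.support, C * ‖y‖ * (1 / 2) ^ k :=
      (norm_sum_le _ _).trans (Finset.sum_le_sum fun k _ => hterm k)
    _ ≤ C * ‖y‖ * 2 := by
      rw [← Finset.mul_sum]
      gcongr
      exact (summable_geometric_two.sum_le_tsum _ fun _ _ => by positivity).trans_eq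
        tsum_geometric_two
    _ = 2 * C * ‖y‖ := by ring

theorem exists_boundedBelow_or_norm_apply_le (S : Y →L[ℝ] Z) (G : Submodule ℝ Y)
    (hGc : IsClosed (G : Set Y)) (hGd : ¬ FiniteDimensional ℝ G) {ε : ℝ} (hε : 0 < ε) :
    (∃ F ≤ G, IsClosed (F : Set Y) ∧ ¬ FiniteDimensional ℝ F ∧
      ∃ c > 0, ∀ x ∈ F, c * ‖x‖ ≤ ‖S x‖) ∨
    (∃ F ≤ G, IsClosed (F : Set Y) ∧ ¬ FiniteDimensional ℝ F ∧
      ∀ x ∈ F, ‖S x‖ ≤ ε * ‖x‖) := by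
  refine or_iff_not_imp_left.mpr fun hbelow => ?_
  push Not at hbelow
  have hsmall : ∀ m, ∀ F ≤ G, IsClosed (F : Set Y) → ¬ FiniteDimensional ℝ F →
      ∃ x ∈ F, ‖x‖ = 1 ∧ ‖S x‖ ≤ ε / 2 * (1 / 4) ^ m := by
    intro m F hFG hFc hFd
    obtain ⟨x, hxF, hx⟩ := hbelow F hFG hFc hFd (ε / 2 * (1 / 4) ^ m) (by positivity)
    have hx0 : 0 < ‖x‖ := norm_pos_iff.mpr fun h => by simp [h] at hx
    refine ⟨‖x‖⁻¹ • x, F.smul_mem _ hxF, by simp [norm_smul, hx0.ne'], ?_⟩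
    rw [map_smul, norm_smul, norm_inv, norm_norm, inv_mul_le_iff₀ hx0]
    exact hx.le.trans_eq (mul_comm _ _)
  obtain ⟨x, g, hxg, hxG, hxS⟩ := exists_unitTriangular_seq G hGc hGd _ hsmall
  refine ⟨(Submodule.span ℝ (range x)).topologicalClosure,
    Submodule.topologicalClosure_minimal _ (Submodule.span_le.mpr (range_subset_iff.mpr hxG)) hGc,
    Submodule.isClosed_topologicalClosure _, fun hfin => ?_, fun y hy => ?_⟩
  · have := Submodule.finiteDimensional_of_le
      (Submodule.le_topologicalClosure (Submodule.span ℝ (range x)))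
    exact Module.Finite.not_linearIndependent_of_infinite _
      (linearIndependent_span hxg.linearIndependent)
  · have hcone : IsClosed {z : Y | ‖S z‖ ≤ ε * ‖z‖} := isClosed_le (by fun_prop) (by fun_prop)
    refine closure_minimal (fun z hz => ?_) hcone hy
    simpa [mul_div_cancel₀] using hxg.norm_apply_le_of_mem_span S hxS hz

end Dichotomy

theorem exists_proj_boundedBelow {ι : Type*} [Fintype ι] {X : ι → Type*}
    [∀ i, NormedAddCommGroup (X i)] [∀ i, NormedSpace ℝ (X i)] (E : Submodule ℝ (Π i, X i))
    (hEc : IsClosed (E : Set (Π i, X i))) (hEd : ¬ FiniteDimensional ℝ E) :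
    ∃ i, ∃ F ≤ E, IsClosed (F : Set (Π i, X i)) ∧ ¬ FiniteDimensional ℝ F ∧
      ∃ c > 0, ∀ x ∈ F, c * ‖x‖ ≤ ‖x i‖ := by
  classical
  have key : ∀ s : Finset ι, (∃ i, ∃ F ≤ E, IsClosed (F : Set (Π i, X i)) ∧
      ¬ FiniteDimensional ℝ F ∧ ∃ c > 0, ∀ x ∈ F, c * ‖x‖ ≤ ‖x i‖) ∨
      ∃ F ≤ E, IsClosed (F : Set (Π i, X i)) ∧ ¬ FiniteDimensional ℝ F ∧
        ∀ x ∈ F, ∀ i ∈ s, ‖x i‖ ≤ 2⁻¹ * ‖x‖ := by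
    intro s
    induction s using Finset.induction_on with
    | empty => exact .inr ⟨E, le_rfl, hEc, hEd, by simp⟩
    | insert i s _ ih =>
      obtain hbelow | ⟨F, hFE, hFc, hFd, hsmall⟩ := ih
      · exact .inl hbelow
      obtain ⟨F', hF'F, hF'c, hF'd, hbelow⟩ | ⟨F', hF'F, hF'c, hF'd, hsmall'⟩ :=
        exists_boundedBelow_or_norm_apply_le (ContinuousLinearMap.proj i) F
          hFc hFd (by norm_num : (0 : ℝ) < 2⁻¹)
      · exact .inl ⟨i, F', hF'F.trans hFE, hF'c, hF'd, hbelow⟩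
      · refine .inr ⟨F', hF'F.trans hFE, hF'c, hF'd, fun x hx j hj => ?_⟩
        rcases Finset.mem_insert.mp hj with rfl | hj
        · exact hsmall' x hx
        · exact hsmall x (hF'F hx) j hj
  obtain h | ⟨F, -, -, hFd, hsmall⟩ := key Finset.univ
  · exact h
  obtain ⟨x, hxF, hx0⟩ := Submodule.exists_mem_ne_zero_of_ne_bot fun h : F = ⊥ =>
    hFd (h ▸ inferInstance)
  have : ‖x‖ ≤ 2⁻¹ * ‖x‖ := (pi_norm_le_iff_of_nonneg (by positivity)).mpr fun i =>
    hsmall x hxF i (Finset.mem_univ i)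
  linarith [norm_pos_iff.mpr hx0]

theorem lpSaturated_finite_sum_general (p : ENNReal) [Fact (1 ≤ p)]
    (n : ℕ) (X : Fin n → Type*) [∀ j, NormedAddCommGroup (X j)]
    [∀ j, NormedSpace ℝ (X j)] [∀ j, CompleteSpace (X j)]
    (h : ∀ j, LpSaturated p (X j)) :
    LpSaturated p (Π j, X j) := by
  intro E hEc hEd
  obtain ⟨j, F, hFE, hFc, hFd, hbelow⟩ := exists_proj_boundedBelow E hEc hEd
  exact ((h j).containsLpIn_of_boundedBelow (ContinuousLinearMap.proj j) F hFc hFd hbelow).mono hFE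

/-- A finite direct sum (with norm equivalent to the ℓ¹-sum of coordinate norms) of
`ℓ^p`-saturated Banach spaces is `ℓ^p`-saturated. -/
theorem lpSaturated_finite_sum (p : ENNReal) [Fact (1 ≤ p)] (hp : p ≠ ⊤)
    (n : ℕ) (X : Fin n → Type*) [∀ j, NormedAddCommGroup (X j)]
    [∀ j, NormedSpace ℝ (X j)] [∀ j, CompleteSpace (X j)]
    (h : ∀ j, LpSaturated p (X j)) :
    LpSaturated p (Π j, X j) :=
  lpSaturated_finite_sum_general p n X h
end

section
/- Let (xₙ) be a bounded sequence in a Banach space X. Then (xₙ) converges weakly to 0 if and only if every subsequence of (xₙ) admits a convex block subsequence that converges to 0 in norm. -/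
open Filter Finset

/-- A sequence in a normed space is weakly null if it converges to `0` in the weak
topology, i.e. `f (x n) → 0` for every continuous linear functional `f`. -/
def WeaklyNull {X : Type*} [NormedAddCommGroup X] [NormedSpace ℝ X] (x : ℕ → X) : Prop :=
  ∀ f : X →L[ℝ] ℝ, Tendsto (fun n => f (x n)) atTop (nhds 0)

/-- Key lemma (Mazur): if `x` is weakly null, then for every strictly monotone `φ`,
every `N` and every `ε > 0` there is a finite convex combination of `x (φ i)`,
`N < i ≤ M`, of norm less than `ε`. -/
lemma exists_convex_combination_small
    {X : Type*} [NormedAddCommGroup X] [NormedSpace ℝ X]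
    (x : ℕ → X) (hw : ∀ f : X →L[ℝ] ℝ, Tendsto (fun n => f (x n)) atTop (nhds 0))
    (φ : ℕ → ℕ) (hφ : StrictMono φ) (N : ℕ) {ε : ℝ} (hε : 0 < ε) :
    ∃ (M : ℕ) (a : ℕ → ℝ), N < M ∧ (∀ i, 0 ≤ a i) ∧
      (∑ i ∈ Finset.Ioc N M, a i) = 1 ∧
      ‖∑ i ∈ Finset.Ioc N M, a i • x (φ i)‖ < ε := by
  set s : Set X := (fun n => x (φ n)) '' Set.Ioi N with hs
  set T : Set X := {y | ∃ (M : ℕ) (a : ℕ → ℝ), N < M ∧ (∀ i, 0 ≤ a i) ∧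
      (∀ i ∉ Finset.Ioc N M, a i = 0) ∧
      (∑ i ∈ Finset.Ioc N M, a i) = 1 ∧
      (∑ i ∈ Finset.Ioc N M, a i • x (φ i)) = y} with hT
  have hsT : s ⊆ T := by
    rintro y ⟨n, hn, rfl⟩
    have hn' : N < n := Set.mem_Ioi.mp hn
    refine ⟨n, fun i => if i = n then 1 else 0, hn', ?_, ?_, ?_, ?_⟩
    · intro i; dsimp only; split <;> norm_num
    · intro i hi; dsimp only; split
      · next h => subst h; exact absurd (Finset.mem_Ioc.2 ⟨hn', le_rfl⟩) hi
      · rfl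
    · rw [Finset.sum_ite_eq' (Finset.Ioc N n) n (fun _ => (1:ℝ))]
      simp [Finset.mem_Ioc, hn']
    · have : ∀ i ∈ Finset.Ioc N n, (if i = n then (1:ℝ) else 0) • x (φ i)
          = if i = n then x (φ i) else 0 := by
        intro i _; split <;> simp
      rw [Finset.sum_congr rfl this, Finset.sum_ite_eq' (Finset.Ioc N n) n (fun i => x (φ i))]
      simp [Finset.mem_Ioc, hn']
  have hTc : Convex ℝ T := by
    rintro y₁ ⟨M₁, a₁, hM₁, h₁0, h₁z, h₁s, rfl⟩ y₂ ⟨M₂, a₂, hM₂, h₂0, h₂z, h₂s, rfl⟩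
      θ τ hθ hτ hθτ
    refine ⟨max M₁ M₂, fun i => θ * a₁ i + τ * a₂ i,
      lt_of_lt_of_le hM₁ (le_max_left _ _), ?_, ?_, ?_, ?_⟩
    · intro i
      exact add_nonneg (mul_nonneg hθ (h₁0 i)) (mul_nonneg hτ (h₂0 i))
    · intro i hi
      have hi₁ : i ∉ Finset.Ioc N M₁ := fun h =>
        hi (Finset.Ioc_subset_Ioc_right (le_max_left _ _) h)
      have hi₂ : i ∉ Finset.Ioc N M₂ := fun h =>
        hi (Finset.Ioc_subset_Ioc_right (le_max_right _ _) h)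
      dsimp only
      rw [h₁z i hi₁, h₂z i hi₂]; ring
    · have e₁ : ∑ i ∈ Finset.Ioc N (max M₁ M₂), a₁ i = ∑ i ∈ Finset.Ioc N M₁, a₁ i :=
        (Finset.sum_subset (Finset.Ioc_subset_Ioc_right (le_max_left _ _))
          (fun i _ hi => h₁z i hi)).symm
      have e₂ : ∑ i ∈ Finset.Ioc N (max M₁ M₂), a₂ i = ∑ i ∈ Finset.Ioc N M₂, a₂ i :=
        (Finset.sum_subset (Finset.Ioc_subset_Ioc_right (le_max_right _ _))
          (fun i _ hi => h₂z i hi)).symm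
      rw [Finset.sum_add_distrib, ← Finset.mul_sum, ← Finset.mul_sum, e₁, e₂, h₁s, h₂s]
      simpa using hθτ
    · have e₁ : ∑ i ∈ Finset.Ioc N (max M₁ M₂), a₁ i • x (φ i)
          = ∑ i ∈ Finset.Ioc N M₁, a₁ i • x (φ i) :=
        (Finset.sum_subset (Finset.Ioc_subset_Ioc_right (le_max_left _ _))
          (fun i _ hi => by rw [h₁z i hi, zero_smul])).symm
      have e₂ : ∑ i ∈ Finset.Ioc N (max M₁ M₂), a₂ i • x (φ i)
          = ∑ i ∈ Finset.Ioc N M₂, a₂ i • x (φ i) :=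
        (Finset.sum_subset (Finset.Ioc_subset_Ioc_right (le_max_right _ _))
          (fun i _ hi => by rw [h₂z i hi, zero_smul])).symm
      have : ∀ i ∈ Finset.Ioc N (max M₁ M₂), (θ * a₁ i + τ * a₂ i) • x (φ i)
          = θ • (a₁ i • x (φ i)) + τ • (a₂ i • x (φ i)) := by
        intro i _; rw [add_smul, mul_smul, mul_smul]
      rw [Finset.sum_congr rfl this, Finset.sum_add_distrib, ← Finset.smul_sum,
        ← Finset.smul_sum, e₁, e₂]
  have h0 : (0 : X) ∈ closure (convexHull ℝ s) := by
    by_contra h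
    obtain ⟨f, u, hu, hb⟩ := geometric_hahn_banach_point_closed
      ((convex_convexHull ℝ s).closure) isClosed_closure h
    rw [map_zero] at hu
    have hfx : Tendsto (fun n => f (x (φ n))) atTop (nhds 0) :=
      (hw f).comp hφ.tendsto_atTop
    have hev : ∀ᶠ n in atTop, f (x (φ n)) < u := hfx.eventually (eventually_lt_nhds hu)
    obtain ⟨n, hnN, hn⟩ := ((eventually_gt_atTop N).and hev).exists
    have : x (φ n) ∈ closure (convexHull ℝ s) :=
      subset_closure (subset_convexHull ℝ s ⟨n, hnN, rfl⟩)
    exact absurd (hb _ this) (not_lt.2 hn.le)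
  rw [Metric.mem_closure_iff] at h0
  obtain ⟨y, hy, hyd⟩ := h0 ε hε
  have hyT : y ∈ T := convexHull_min hsT hTc hy
  obtain ⟨M, a, hM, h0a, _, hsa, hval⟩ := hyT
  refine ⟨M, a, hM, h0a, hsa, ?_⟩
  rw [hval]
  rwa [dist_comm, dist_zero_right] at hyd

/-- A bounded sequence `(xₙ)` in a Banach space is weakly null if and only if every
subsequence of `(xₙ)` admits a convex block subsequence converging to `0` in norm. -/
theorem weaklyNull_iff_convex_block
    {X : Type*} [NormedAddCommGroup X] [NormedSpace ℝ X] [CompleteSpace X]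
    (x : ℕ → X) (hb : ∃ C : ℝ, ∀ n, ‖x n‖ ≤ C) :
    WeaklyNull x ↔
      ∀ φ : ℕ → ℕ, StrictMono φ →
        ∃ (l : ℕ → ℕ) (a : ℕ → ℝ), StrictMono l ∧ (∀ i, 0 ≤ a i) ∧
          (∀ k, ∑ i ∈ Finset.Ioc (l k) (l (k + 1)), a i = 1) ∧
          Tendsto (fun k => ∑ i ∈ Finset.Ioc (l k) (l (k + 1)), a i • x (φ i))
            atTop (nhds 0) := by
  constructor
  · intro hw φ hφ
    classical
    have key : ∀ k N : ℕ, ∃ (M : ℕ) (a : ℕ → ℝ), N < M ∧ (∀ i, 0 ≤ a i) ∧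
        (∑ i ∈ Finset.Ioc N M, a i) = 1 ∧
        ‖∑ i ∈ Finset.Ioc N M, a i • x (φ i)‖ < 1 / (k + 1) := by
      intro k N
      exact exists_convex_combination_small x hw φ hφ N
        (by positivity : (0:ℝ) < 1 / (k + 1))
    choose M A hNM hA0 hA1 hAn using key
    set l : ℕ → ℕ := fun k => Nat.rec 0 (fun k lk => M k lk) k with hl
    have hlsucc : ∀ k, l (k + 1) = M k (l k) := fun k => rfl
    have hlmono : StrictMono l :=
      strictMono_nat_of_lt_succ (fun k => by rw [hlsucc]; exact hNM k (l k))
    set a : ℕ → ℝ := fun i =>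
      if h : ∃ k, l k < i ∧ i ≤ l (k + 1) then A (Nat.find h) (l (Nat.find h)) i else 0
      with ha
    have hablock : ∀ k, ∀ i ∈ Finset.Ioc (l k) (l (k + 1)), a i = A k (l k) i := by
      intro k i hi
      rw [Finset.mem_Ioc] at hi
      have hex : ∃ j, l j < i ∧ i ≤ l (j + 1) := ⟨k, hi⟩
      have hfind : Nat.find hex = k := by
        have h1 : Nat.find hex ≤ k := Nat.find_le hi
        rcases h1.lt_or_eq with h | h
        · exfalso
          have := (Nat.find_spec hex).2
          have : i ≤ l k := this.trans (hlmono.monotone (Nat.succ_le_of_lt h))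
          exact absurd hi.1 (not_lt.2 this)
        · exact h
      rw [ha]
      simp only [dif_pos hex, hfind]
    refine ⟨l, a, hlmono, ?_, ?_, ?_⟩
    · intro i
      rw [ha]
      dsimp only
      split
      · exact hA0 _ _ _
      · exact le_rfl
    · intro k
      rw [Finset.sum_congr rfl (hablock k), hlsucc]
      exact hA1 k (l k)
    · refine squeeze_zero_norm ?_ tendsto_one_div_add_atTop_nhds_zero_nat
      intro k
      rw [Finset.sum_congr rfl (fun i hi => by rw [hablock k i hi]), hlsucc]
      exact (hAn k (l k)).le
  · intro H f
    by_contra hc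
    rw [Metric.tendsto_atTop] at hc
    push_neg at hc
    obtain ⟨ε, hε, hfreq⟩ := hc
    have hfreq' : ∃ᶠ n in atTop, ε ≤ |f (x n)| := by
      rw [frequently_atTop]
      intro N
      obtain ⟨n, hnN, hn⟩ := hfreq N
      refine ⟨n, hnN, ?_⟩
      rwa [Real.dist_eq, sub_zero] at hn
    obtain ⟨φ, hφ, hφP⟩ := extraction_of_frequently_atTop hfreq'
    have hor : (∃ᶠ n in atTop, ε ≤ f (x (φ n))) ∨ (∃ᶠ n in atTop, ε ≤ -f (x (φ n))) := by
      rw [← frequently_or_distrib]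
      apply Filter.Eventually.frequently
      filter_upwards with n
      exact le_abs.mp (hφP n)
    obtain ⟨g, hgfreq⟩ : ∃ g : X →L[ℝ] ℝ, ∃ᶠ n in atTop, ε ≤ g (x (φ n)) := by
      rcases hor with h | h
      · exact ⟨f, h⟩
      · exact ⟨-f, by simpa using h⟩
    obtain ⟨ψ, hψ, hψP⟩ := extraction_of_frequently_atTop hgfreq
    obtain ⟨l, a, hlm, ha0, ha1, htend⟩ := H (φ ∘ ψ) (hφ.comp hψ)
    have hblock : ∀ k, ε ≤ g (∑ i ∈ Finset.Ioc (l k) (l (k + 1)), a i • x ((φ ∘ ψ) i)) := by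
      intro k
      rw [map_sum]
      have : ∀ i ∈ Finset.Ioc (l k) (l (k + 1)), a i * ε ≤ g (a i • x ((φ ∘ ψ) i)) := by
        intro i _
        rw [g.map_smul, smul_eq_mul]
        exact mul_le_mul_of_nonneg_left (hψP i) (ha0 i)
      calc ε = (∑ i ∈ Finset.Ioc (l k) (l (k + 1)), a i) * ε := by rw [ha1 k, one_mul]
        _ = ∑ i ∈ Finset.Ioc (l k) (l (k + 1)), a i * ε := by rw [Finset.sum_mul]
        _ ≤ _ := Finset.sum_le_sum this
    have hgy : Tendsto (fun k => g (∑ i ∈ Finset.Ioc (l k) (l (k + 1)),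
        a i • x ((φ ∘ ψ) i))) atTop (nhds 0) := by
      exact (g.continuous.tendsto' 0 0 (map_zero g)).comp htend
    have : ε ≤ 0 := ge_of_tendsto' hgy hblock
    linarith
end

section
/- If X* (the dual of a Banach space X) has the Schur property, then X does not contain an isomorphic copy of ℓ¹. -/
open Filter

/-- A normed space has the Schur property if every weakly convergent sequence is norm
convergent (to the same limit). -/
def SchurProperty (E : Type*) [NormedAddCommGroup E] [NormedSpace ℝ E] : Prop :=
  ∀ (x : ℕ → E) (x₀ : E),
    (∀ f : E →L[ℝ] ℝ, Tendsto (fun n => f (x n)) atTop (nhds (f x₀))) →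
    Tendsto x atTop (nhds x₀)

instance : Fact ((1 : ENNReal) ≤ 1) := ⟨le_refl _⟩

/-!
Let `T : ℓ¹ → X` satisfy `c ‖v‖ ≤ ‖T v‖` and put `x k = T eₖ`. By Hahn–Banach every sign pattern
`σ ∈ {±1}ᴺ` is realised by some `f_σ ∈ X*` with `‖f_σ‖ ≤ 1/c` and `f_σ (x k) = σ k`. Averaging
`σ k • f_σ` over the cube gives functionals taking the value `1` at `x k` which, by orthonormality
of the Rademacher functions and Cauchy–Schwarz, satisfy the upper `ℓ²`-estimate
`‖∑ a k • g k‖ ≤ (1/c) (∑ a k ²)^{1/2}`; weak*-limits along an ultrafilter as `N → ∞` keep both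
properties. By Bessel's inequality such a sequence is weakly null in `X*`, yet
`1 = g k (x k) ≤ ‖g k‖ ‖T‖`, so it is not norm null.
-/

open Finset Topology
open scoped BigOperators

section Expectation

variable {ι Ω V : Type*} [SeminormedAddCommGroup V] [NormedSpace ℝ V] [Module ℚ≥0 V]

lemma norm_expect_le_expect_norm (s : Finset ι) (f : ι → V) :
    ‖𝔼 i ∈ s, f i‖ ≤ 𝔼 i ∈ s, ‖f i‖ :=
  le_expect_of_subadditive norm_zero norm_add_le fun q x => by
    rw [← NNRat.cast_smul_eq_nnqsmul ℝ, norm_smul, NNRat.smul_def]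
    simp

lemma norm_expect_smul_le [Fintype Ω] (u : Ω → ℝ) (f : Ω → V) {C : ℝ}
    (hf : ∀ ω, ‖f ω‖ ≤ C) : ‖𝔼 ω, u ω • f ω‖ ≤ C * √(𝔼 ω, u ω ^ 2) := by
  rcases isEmpty_or_nonempty Ω with hΩ | hΩ
  · simp
  have hC : 0 ≤ C := (norm_nonneg _).trans (hf hΩ.some)
  have cauchy_schwarz : 𝔼 ω, |u ω| ≤ √(𝔼 ω, u ω ^ 2) := by
    refine (le_abs_self _).trans (Real.abs_le_sqrt ?_)
    simpa using expect_mul_sq_le_sq_mul_sq univ (fun ω => |u ω|) 1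
  calc ‖𝔼 ω, u ω • f ω‖ ≤ 𝔼 ω, |u ω| * C := by
        refine (norm_expect_le_expect_norm _ _).trans (expect_le_expect fun ω _ => ?_)
        rw [norm_smul, Real.norm_eq_abs]
        exact mul_le_mul_of_nonneg_left (hf ω) (abs_nonneg _)
    _ = (𝔼 ω, |u ω|) * C := (expect_mul _ _ _).symm
    _ ≤ C * √(𝔼 ω, u ω ^ 2) := by rw [mul_comm]; gcongr

lemma expect_sq_sum_of_orthonormal [Fintype Ω] [DecidableEq ι] (s : Finset ι)
    (r : ι → Ω → ℝ) (hr : ∀ j ∈ s, ∀ k ∈ s, 𝔼 ω, r j ω * r k ω = if j = k then 1 else 0)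
    (a : ι → ℝ) : 𝔼 ω, (∑ k ∈ s, a k * r k ω) ^ 2 = ∑ k ∈ s, a k ^ 2 := by
  calc 𝔼 ω, (∑ k ∈ s, a k * r k ω) ^ 2
      = 𝔼 ω, ∑ j ∈ s, ∑ k ∈ s, a j * a k * (r j ω * r k ω) := by
        simp_rw [sq, sum_mul_sum]
        exact expect_congr rfl fun ω _ => sum_congr rfl fun j _ => sum_congr rfl fun k _ => by ring
    _ = ∑ j ∈ s, ∑ k ∈ s, a j * a k * 𝔼 ω, r j ω * r k ω := by
        simp_rw [expect_sum_comm, mul_expect]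
    _ = ∑ k ∈ s, a k ^ 2 := sum_congr rfl fun j hj => by
        rw [sum_congr rfl fun k hk => by rw [hr j hj k hk]]
        simp [hj, sq]

end Expectation

-- Extended by `0` for `k ≥ N`, so that the cubes of all dimensions share the index set `ℕ`.
def rademacher (N k : ℕ) (σ : Fin N → ℤˣ) : ℝ :=
  if h : k < N then ((σ ⟨k, h⟩ : ℤ) : ℝ) else 0

lemma abs_rademacher_le_one (N k : ℕ) (σ : Fin N → ℤˣ) : |rademacher N k σ| ≤ 1 := by
  unfold rademacher
  split_ifs with hk
  · rcases Int.units_eq_one_or (σ ⟨k, hk⟩) with h | h <;> simp [h]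
  · simp

lemma rademacher_eq_zero_of_le {N k : ℕ} (h : N ≤ k) (σ : Fin N → ℤˣ) : rademacher N k σ = 0 :=
  dif_neg h.not_gt

lemma expect_rademacher_mul_rademacher {N j k : ℕ} (hj : j < N) (hk : k < N) :
    𝔼 σ, rademacher N j σ * rademacher N k σ = if j = k then 1 else 0 := by
  split_ifs with hjk
  · subst hjk
    have hsq : ∀ σ, rademacher N j σ * rademacher N j σ = 1 := fun σ => by
      rcases Int.units_eq_one_or (σ ⟨j, hj⟩) with h | h <;> simp [rademacher, hj, h]
    simp [hsq]
  · -- flipping the `j`-th sign permutes the cube and negates the summand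
    set τ : Fin N → ℤˣ := Pi.mulSingle ⟨j, hj⟩ (-1)
    have hflip : ∀ σ, rademacher N j σ * rademacher N k σ
        = -(rademacher N j (τ * σ) * rademacher N k (τ * σ)) := fun σ => by
      have hkj : (⟨k, hk⟩ : Fin N) ≠ ⟨j, hj⟩ := fun h => hjk (Fin.mk.inj h).symm
      simp [rademacher, hj, hk, τ, Pi.mulSingle_eq_of_ne hkj]
    have := Fintype.expect_equiv (Equiv.mulLeft τ)
      (fun σ => rademacher N j σ * rademacher N k σ)
      (fun σ => -(rademacher N j σ * rademacher N k σ)) hflip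
    rw [expect_neg_distrib] at this
    linarith

lemma norm_sum_smul_expect_rademacher_smul_le {V : Type*} [SeminormedAddCommGroup V]
    [NormedSpace ℝ V] [Module ℚ≥0 V] {N n : ℕ} (hn : n ≤ N) (f : (Fin N → ℤˣ) → V) {C : ℝ}
    (hf : ∀ σ, ‖f σ‖ ≤ C) (a : ℕ → ℝ) :
    ‖∑ k ∈ range n, a k • 𝔼 σ, rademacher N k σ • f σ‖ ≤ C * √(∑ k ∈ range n, a k ^ 2) := by
  have hsum : ∑ k ∈ range n, a k • 𝔼 σ, rademacher N k σ • f σ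
      = 𝔼 σ, (∑ k ∈ range n, a k * rademacher N k σ) • f σ := by
    simp_rw [smul_expect, ← expect_sum_comm, smul_smul, ← sum_smul]
  have hortho : ∀ j ∈ range n, ∀ k ∈ range n,
      𝔼 σ, rademacher N j σ * rademacher N k σ = if j = k then 1 else 0 := fun j hj k hk =>
    expect_rademacher_mul_rademacher ((mem_range.1 hj).trans_le hn) ((mem_range.1 hk).trans_le hn)
  rw [hsum, ← expect_sq_sum_of_orthonormal _ _ hortho a]
  exact norm_expect_smul_le _ _ hf

lemma exists_l1_dual_apply_single {α : Type*} [DecidableEq α] (s : Finset α) (ε : α → ℝ)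
    (hε : ∀ k, |ε k| ≤ 1) (hs : ∀ k ∉ s, ε k = 0) :
    ∃ ψ : StrongDual ℝ (lp (fun _ : α => ℝ) 1), ‖ψ‖ ≤ 1 ∧ ∀ k, ψ (lp.single 1 k 1) = ε k := by
  refine ⟨∑ k ∈ s, ε k • lp.evalCLM ℝ (fun _ : α => ℝ) 1 k, ?_, fun k => ?_⟩
  · refine ContinuousLinearMap.opNorm_le_bound _ zero_le_one fun v => ?_
    have hv : ∑ k ∈ s, ‖v k‖ ≤ ‖v‖ := by
      simpa using lp.sum_rpow_le_norm_rpow (p := 1) (by simp) v s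
    calc ‖(∑ k ∈ s, ε k • lp.evalCLM ℝ (fun _ : α => ℝ) 1 k) v‖
        = ‖∑ k ∈ s, ε k * v k‖ := by simp [lp.evalCLM]
      _ ≤ ∑ k ∈ s, ‖v k‖ := by
          refine (norm_sum_le _ _).trans (sum_le_sum fun k _ => ?_)
          rw [norm_mul, Real.norm_eq_abs]
          exact mul_le_of_le_one_left (norm_nonneg _) (hε k)
      _ ≤ 1 * ‖v‖ := by simpa using hv
  · by_cases hk : k ∈ s
    · simp [lp.evalCLM, Pi.single_apply, hk]
    · simp [lp.evalCLM, Pi.single_apply, hk, hs k hk]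

theorem exists_dual_comp_eq_of_le_norm {𝕜 E F : Type*} [RCLike 𝕜] [NormedAddCommGroup E]
    [NormedSpace 𝕜 E] [NormedAddCommGroup F] [NormedSpace 𝕜 F] (T : E →L[𝕜] F) {c : ℝ}
    (hc : 0 < c) (hT : ∀ v, c * ‖v‖ ≤ ‖T v‖) (ψ : StrongDual 𝕜 E) :
    ∃ f : StrongDual 𝕜 F, ‖f‖ ≤ ‖ψ‖ / c ∧ ∀ v, f (T v) = ψ v := by
  have hinj : Function.Injective T := (injective_iff_map_eq_zero T).2 fun v hv => by
    have := hT v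
    rw [hv, norm_zero] at this
    exact norm_le_zero_iff.1 (nonpos_of_mul_nonpos_right this hc)
  let e := LinearEquiv.ofInjective (T : E →ₗ[𝕜] F) hinj
  have he : ∀ y, ((y : LinearMap.range (T : E →ₗ[𝕜] F)) : F) = T (e.symm y) := fun y => by
    conv_lhs => rw [← e.apply_symm_apply y]
    rfl
  let φ : StrongDual 𝕜 (LinearMap.range (T : E →ₗ[𝕜] F)) :=
    (ψ.toLinearMap ∘ₗ e.symm.toLinearMap).mkContinuous (‖ψ‖ / c) fun y => by
      calc ‖ψ (e.symm y)‖ ≤ ‖ψ‖ * ‖e.symm y‖ := ψ.le_opNorm _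
        _ ≤ ‖ψ‖ * (‖y‖ / c) := by
          gcongr
          rw [le_div_iff₀ hc, mul_comm, Submodule.coe_norm, he]
          exact hT _
        _ = ‖ψ‖ / c * ‖y‖ := by ring
  obtain ⟨f, hfφ, hf⟩ := exists_extension_norm_eq _ φ
  refine ⟨f, hf ▸ φ.mkContinuous_norm_le (by positivity) _, fun v => ?_⟩
  rw [show T v = ((e v : LinearMap.range (T : E →ₗ[𝕜] F)) : F) from rfl, hfφ]
  simp [φ]

section WeakLimits

variable {ι 𝕜 E : Type*} [NontriviallyNormedField 𝕜] [SeminormedAddCommGroup E] [NormedSpace 𝕜 E]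

theorem exists_tendsto_apply_of_eventually_norm_le [ProperSpace 𝕜] (U : Ultrafilter ι)
    (h : ι → StrongDual 𝕜 E) {B : ℝ} (hB : ∀ᶠ i in U, ‖h i‖ ≤ B) :
    ∃ g : StrongDual 𝕜 E, ∀ x, Tendsto (fun i => h i x) U (𝓝 (g x)) := by
  obtain ⟨g, -, hg⟩ := (WeakDual.isCompact_closedBall 0 B).ultrafilter_le_nhds
    (U.map (fun i => StrongDual.toWeakDual (h i)))
    (le_principal_iff.2 (hB.mono fun i hi => by simpa using hi))
  exact ⟨WeakDual.toStrongDual g, fun x => ((WeakDual.eval_continuous x).tendsto g).comp hg⟩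

lemma ContinuousLinearMap.opNorm_le_of_tendsto_apply {F : Type*} [SeminormedAddCommGroup F]
    [NormedSpace 𝕜 F] {l : Filter ι} [l.NeBot] {h : ι → E →L[𝕜] F} {g : E →L[𝕜] F}
    (hg : ∀ x, Tendsto (fun i => h i x) l (𝓝 (g x))) {M : ℝ} (hM : ∀ᶠ i in l, ‖h i‖ ≤ M) :
    ‖g‖ ≤ M := by
  obtain ⟨i, hi⟩ := hM.exists
  refine g.opNorm_le_bound ((norm_nonneg _).trans hi) fun x => ?_
  refine le_of_tendsto (hg x).norm (hM.mono fun i hi => ?_)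
  exact (h i).le_opNorm x |>.trans (mul_le_mul_of_nonneg_right hi (norm_nonneg x))

end WeakLimits

section UpperL2Estimate

variable {E : Type*} [SeminormedAddCommGroup E] [NormedSpace ℝ E]

def HasUpperL2Estimate (g : ℕ → E) (C : ℝ) : Prop :=
  ∀ (n : ℕ) (a : ℕ → ℝ), ‖∑ k ∈ range n, a k • g k‖ ≤ C * √(∑ k ∈ range n, a k ^ 2)

theorem HasUpperL2Estimate.tendsto_dual_apply_zero {g : ℕ → E} {C : ℝ}
    (hg : HasUpperL2Estimate g C) (φ : StrongDual ℝ E) :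
    Tendsto (fun k => φ (g k)) atTop (𝓝 0) := by
  set a := fun k => φ (g k)
  have bessel : ∀ n, ∑ k ∈ range n, a k ^ 2 ≤ (‖φ‖ * C) ^ 2 := fun n => by
    set t := √(∑ k ∈ range n, a k ^ 2)
    have ht : t ^ 2 = ∑ k ∈ range n, a k ^ 2 := Real.sq_sqrt (sum_nonneg fun k _ => sq_nonneg _)
    have : t ^ 2 ≤ ‖φ‖ * C * t := by
      calc t ^ 2 = φ (∑ k ∈ range n, a k • g k) := by simp [ht, a, sq]
        _ ≤ ‖φ‖ * ‖∑ k ∈ range n, a k • g k‖ := (le_abs_self _).trans (φ.le_opNorm _)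
        _ ≤ ‖φ‖ * C * t := by rw [mul_assoc]; gcongr; exact hg n a
    nlinarith [sq_nonneg (‖φ‖ * C - t)]
  have hsq : Tendsto (fun k => a k ^ 2) atTop (𝓝 0) :=
    (summable_of_sum_range_le (fun k => sq_nonneg _) bessel).tendsto_atTop_zero
  rw [tendsto_zero_iff_abs_tendsto_zero]
  have := (Real.continuous_sqrt.tendsto 0).comp hsq
  simpa only [Function.comp_def, Real.sqrt_sq_eq_abs, Real.sqrt_zero] using this

end UpperL2Estimate

theorem exists_hasUpperL2Estimate_of_rademacher {E : Type*} [SeminormedAddCommGroup E]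
    [NormedSpace ℝ E] (x : ℕ → E) {C : ℝ}
    (h : ∀ N (σ : Fin N → ℤˣ), ∃ f : StrongDual ℝ E, ‖f‖ ≤ C ∧ ∀ k, f (x k) = rademacher N k σ) :
    ∃ g : ℕ → StrongDual ℝ E, (∀ k, g k (x k) = 1) ∧ HasUpperL2Estimate g C := by
  choose f hf hfx using h
  let U := Ultrafilter.of (atTop : Filter ℕ)
  have hU : (U : Filter ℕ) ≤ atTop := Ultrafilter.of_le _
  let avg : ℕ → ℕ → StrongDual ℝ E := fun N k => 𝔼 σ, rademacher N k σ • f N σ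
  have avg_apply : ∀ N k y, avg N k y = 𝔼 σ, rademacher N k σ * f N σ y := by
    simp [avg, Finset.expect]
  have avg_norm : ∀ k, ∀ᶠ N in U, ‖avg N k‖ ≤ C := fun k =>
    hU <| (eventually_gt_atTop k).mono fun N hN => by
      simpa [sq, expect_rademacher_mul_rademacher hN hN] using
        norm_expect_smul_le (rademacher N k) (f N) (hf N)
  choose g hg using fun k => exists_tendsto_apply_of_eventually_norm_le U (avg · k) (avg_norm k)
  refine ⟨g, fun k => ?_, fun n a => ?_⟩
  · have : ∀ᶠ N in U, avg N k (x k) = 1 := hU <| (eventually_gt_atTop k).mono fun N hN => by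
      simpa [avg_apply, hfx] using expect_rademacher_mul_rademacher hN hN
    exact tendsto_nhds_unique (hg k (x k)) (tendsto_const_nhds.congr' (this.mono fun _ h => h.symm))
  · refine ContinuousLinearMap.opNorm_le_of_tendsto_apply (l := U)
      (h := fun N => ∑ k ∈ range n, a k • avg N k) (fun y => ?_)
      (hU <| (eventually_ge_atTop n).mono fun N hN =>
        norm_sum_smul_expect_rademacher_smul_le hN _ (hf N) a)
    simpa using tendsto_finsetSum _ fun k _ => (hg k y).const_mul (a k)

theorem not_contains_l1_of_dual_schur_general
    (X : Type*) [NormedAddCommGroup X] [NormedSpace ℝ X]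
    (h : SchurProperty (X →L[ℝ] ℝ)) :
    ¬ ∃ T : lp (fun _ : ℕ => ℝ) 1 →L[ℝ] X, ∃ c > 0, ∀ v, c * ‖v‖ ≤ ‖T v‖ := by
  rintro ⟨T, c, hc, hT⟩
  obtain ⟨g, hg_one, hg_L2⟩ := exists_hasUpperL2Estimate_of_rademacher
    (fun k => T (lp.single 1 k 1)) (C := 1 / c) fun N σ => by
      obtain ⟨ψ, hψ, hψ_single⟩ := exists_l1_dual_apply_single (range N) (rademacher N · σ)
        (abs_rademacher_le_one N · σ) fun k hk => rademacher_eq_zero_of_le (by simpa using hk) σ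
      obtain ⟨f, hf, hfT⟩ := exists_dual_comp_eq_of_le_norm T hc hT ψ
      exact ⟨f, hf.trans (by gcongr), fun k => (hfT _).trans (hψ_single k)⟩
  have hg_zero : Tendsto (fun k => ‖g k‖) atTop (𝓝 0) := by
    simpa using (h g 0 fun φ => by simpa using hg_L2.tendsto_dual_apply_zero φ).norm
  have hg_large : ∀ k, 1 ≤ ‖g k‖ * ‖T‖ := fun k => by
    calc (1 : ℝ) = g k (T (lp.single 1 k 1)) := (hg_one k).symm
      _ ≤ ‖g k‖ * ‖T (lp.single 1 k 1)‖ := (le_abs_self _).trans ((g k).le_opNorm _)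
      _ ≤ ‖g k‖ * ‖T‖ := by
        gcongr
        simpa [lp.norm_single] using T.le_opNorm (lp.single 1 k 1)
  exact zero_lt_one.not_ge (ge_of_tendsto' (by simpa using hg_zero.mul_const ‖T‖) hg_large)

/-- If the dual `X*` of a Banach space `X` has the Schur property, then `X` contains no
isomorphic copy of `ℓ¹`. -/
theorem not_contains_l1_of_dual_schur
    (X : Type*) [NormedAddCommGroup X] [NormedSpace ℝ X] [CompleteSpace X]
    (h : SchurProperty (X →L[ℝ] ℝ)) :
    ¬ ∃ T : lp (fun _ : ℕ => ℝ) 1 →L[ℝ] X, ∃ c > 0, ∀ v, c * ‖v‖ ≤ ‖T v‖ :=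
  not_contains_l1_of_dual_schur_general X h
end

section
/- Let X = X₁ ⊕ X₂ be a direct sum of Banach spaces. If the ideal U(X) of unconditionally converging operators on X is complemented in L(X), then U(X₁) is complemented in L(X₁). The same holds with unconditionally converging replaced by weakly compact operators. -/
/-! `X₁` is a retract of `X₁ × X₂` via `inl` and `fst`. Both classes of operators are operator
ideals, so they are preserved by `S ↦ fst ∘ S ∘ inl` and `T ↦ inl ∘ T ∘ fst`; conjugating a
projection `P` onto the class on `L(X₁ × X₂)` by these two maps gives a projection onto the
class on `L(X₁)`. -/

open Bornology

/-- `T` is unconditionally converging: it maps weakly unconditionally Cauchy series to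
unconditionally convergent series (recall that in a Banach space `Summable` is exactly
unconditional convergence). -/
def UncondConverging {X : Type*} [NormedAddCommGroup X] [NormedSpace ℝ X]
    (T : X →L[ℝ] X) : Prop :=
  ∀ x : ℕ → X, (∀ f : X →L[ℝ] ℝ, Summable fun n => |f (x n)|) →
    Summable fun n => T (x n)

/-- `T` is weakly compact: it maps bounded sets to relatively weakly compact sets. -/
def WeaklyCompactOp {X : Type*} [NormedAddCommGroup X] [NormedSpace ℝ X]
    (T : X →L[ℝ] X) : Prop :=
  ∀ s : Set X, IsBounded s → IsCompact (closure (toWeakSpace ℝ X '' (T '' s)))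

/-- The class `C` of operators on `X` is complemented in `L(X)`: there is a bounded linear
projection of `L(X)` onto the subspace of operators in `C`. -/
def ComplementedClass {X : Type*} [NormedAddCommGroup X] [NormedSpace ℝ X]
    (C : (X →L[ℝ] X) → Prop) : Prop :=
  ∃ P : (X →L[ℝ] X) →L[ℝ] (X →L[ℝ] X),
    (∀ T, C (P T)) ∧ (∀ T, C T → P T = T)

section Sandwich

open ContinuousLinearMap

variable {X Y : Type*} [NormedAddCommGroup X] [NormedSpace ℝ X]
  [NormedAddCommGroup Y] [NormedSpace ℝ Y]

noncomputable def sandwichL (A : Y →L[ℝ] X) (B : X →L[ℝ] Y) :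
    (X →L[ℝ] X) →L[ℝ] (Y →L[ℝ] Y) :=
  (postcomp Y B).comp (precomp X A)

@[simp]
theorem sandwichL_apply (A : Y →L[ℝ] X) (B : X →L[ℝ] Y) (S : X →L[ℝ] X) :
    sandwichL A B S = B ∘L S ∘L A :=
  rfl

theorem ComplementedClass.of_retract {C : (X →L[ℝ] X) → Prop} {D : (Y →L[ℝ] Y) → Prop}
    (A : Y →L[ℝ] X) (B : X →L[ℝ] Y) (hBA : B ∘L A = .id ℝ Y)
    (hC : ∀ S, C S → D (B ∘L S ∘L A)) (hD : ∀ T, D T → C (A ∘L T ∘L B)) :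
    ComplementedClass C → ComplementedClass D := by
  rintro ⟨P, hPC, hP⟩
  refine ⟨sandwichL A B ∘L P ∘L sandwichL B A, fun T => hC _ (hPC _), fun T hT => ?_⟩
  simp only [coe_comp, Function.comp_apply, sandwichL_apply, hP _ (hD T hT)]
  rw [← comp_assoc, ← comp_assoc, hBA, id_comp, comp_assoc, hBA, comp_id]

theorem UncondConverging.comp_comp {T : X →L[ℝ] X} (hT : UncondConverging T)
    (A : Y →L[ℝ] X) (B : X →L[ℝ] Y) : UncondConverging (B ∘L T ∘L A) := by
  intro x hx
  have hTA : Summable fun n => T (A (x n)) := hT _ fun f => hx (f ∘L A)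
  exact hTA.map B.toLinearMap.toAddMonoidHom B.continuous

theorem isCompact_closure_toWeakSpace_image (f : X →L[ℝ] Y) {s : Set X}
    (hs : IsCompact (closure (toWeakSpace ℝ X '' s))) :
    IsCompact (closure (toWeakSpace ℝ Y '' (f '' s))) := by
  have himage : toWeakSpace ℝ Y '' (f '' s) = WeakSpace.map f '' (toWeakSpace ℝ X '' s) := by
    simp only [Set.image_image]
    rfl
  rw [himage, ← image_closure_of_isCompact hs (WeakSpace.map f).continuous.continuousOn]
  exact hs.image (WeakSpace.map f).continuous

theorem WeaklyCompactOp.comp_comp {T : X →L[ℝ] X} (hT : WeaklyCompactOp T)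
    (A : Y →L[ℝ] X) (B : X →L[ℝ] Y) : WeaklyCompactOp (B ∘L T ∘L A) := by
  intro s hs
  have hTA := hT _ (A.lipschitz.isBounded_image hs)
  simpa only [Set.image_image, coe_comp, Function.comp_apply] using
    isCompact_closure_toWeakSpace_image B hTA

end Sandwich

theorem complemented_ideal_summand_general
    (X₁ X₂ : Type*) [NormedAddCommGroup X₁] [NormedSpace ℝ X₁]
    [NormedAddCommGroup X₂] [NormedSpace ℝ X₂] :
    (ComplementedClass (fun T : (X₁ × X₂) →L[ℝ] (X₁ × X₂) => UncondConverging T) →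
      ComplementedClass (fun T : X₁ →L[ℝ] X₁ => UncondConverging T)) ∧
    (ComplementedClass (fun T : (X₁ × X₂) →L[ℝ] (X₁ × X₂) => WeaklyCompactOp T) →
      ComplementedClass (fun T : X₁ →L[ℝ] X₁ => WeaklyCompactOp T)) :=
  ⟨.of_retract (.inl ℝ X₁ X₂) (.fst ℝ X₁ X₂) (ContinuousLinearMap.fst_comp_inl ..)
      (fun _ h => h.comp_comp _ _) (fun _ h => h.comp_comp _ _),
    .of_retract (.inl ℝ X₁ X₂) (.fst ℝ X₁ X₂) (ContinuousLinearMap.fst_comp_inl ..)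
      (fun _ h => h.comp_comp _ _) (fun _ h => h.comp_comp _ _)⟩

/-- If `X = X₁ ⊕ X₂` and the unconditionally converging operators `U(X)` are complemented
in `L(X)`, then `U(X₁)` is complemented in `L(X₁)`; the same holds for the weakly compact
operators. -/
theorem complemented_ideal_summand
    (X₁ X₂ : Type*) [NormedAddCommGroup X₁] [NormedSpace ℝ X₁] [CompleteSpace X₁]
    [NormedAddCommGroup X₂] [NormedSpace ℝ X₂] [CompleteSpace X₂] :
    (ComplementedClass (fun T : (X₁ × X₂) →L[ℝ] (X₁ × X₂) => UncondConverging T) →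
      ComplementedClass (fun T : X₁ →L[ℝ] X₁ => UncondConverging T)) ∧
    (ComplementedClass (fun T : (X₁ × X₂) →L[ℝ] (X₁ × X₂) => WeaklyCompactOp T) →
      ComplementedClass (fun T : X₁ →L[ℝ] X₁ => WeaklyCompactOp T)) :=
  complemented_ideal_summand_general X₁ X₂
end
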